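/- For any S₁, S₂ ∈ Sym⁺(m), the curve γ(t) := mexp((1−t)·mlog(S₁) + t·mlog(S₂)), t ∈ [0,1], takes values in Sym⁺(m), satisfies γ(0) = S₁ and γ(1) = S₂, and satisfies d_LE(γ(s), γ(t)) = |s − t| · d_LE(S₁, S₂) for all s, t ∈ [0,1]. Consequently (Sym⁺(m), d_LE) is a geodesic metric space. -/

import Mathlib

/-!
Exponentials of symmetric matrices are positive semidefinite and invertible, hence positive
definite, and `exp` is injective on symmetric matrices (the functional-calculus logarithm undoes
it). So any `mlog` inverting `mexp` on `Sym⁺(m)` inverts it on all of `mexp '' Sym(m)`, the curve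
`mlog ∘ γ` is the segment from `mlog S₁` to `mlog S₂`, and `d_LE` along `γ` is the Frobenius norm
of a scalar multiple of `mlog S₁ - mlog S₂`.
-/

open Matrix Set

/-- The matrix exponential on `m × m` real matrices. -/
noncomputable def mexp {m : ℕ} (A : Matrix (Fin m) (Fin m) ℝ) : Matrix (Fin m) (Fin m) ℝ :=
  NormedSpace.exp A

/-- The Frobenius norm of an `m × m` real matrix. -/
noncomputable def frobNorm {m : ℕ} (A : Matrix (Fin m) (Fin m) ℝ) : ℝ :=
  Real.sqrt (∑ i, ∑ j, (A i j) ^ 2)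

namespace Matrix

-- The operator norm only makes the functional calculus available; `NormedSpace.exp` depends on
-- the topology alone, which this norm does not change.
open scoped MatrixOrder Matrix.Norms.L2Operator

variable {n : Type*} [Fintype n] [DecidableEq n]

theorem IsHermitian.posDef_exp {A : Matrix n n ℝ} (hA : A.IsHermitian) :
    (NormedSpace.exp A).PosDef :=
  (nonneg_iff_posSemidef.mp hA.isSelfAdjoint.exp_nonneg).posDef_iff_isUnit.mpr (isUnit_exp A)

theorem exp_injOn_isHermitian :
    InjOn (NormedSpace.exp : Matrix n n ℝ → Matrix n n ℝ) {A | A.IsHermitian} :=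
  fun A hA B hB h => by
    rw [← CFC.log_exp A hA.isSelfAdjoint, h, CFC.log_exp B hB.isSelfAdjoint]

end Matrix

section Frobenius

attribute [local instance] Matrix.frobeniusNormedAddCommGroup Matrix.frobeniusNormedSpace

theorem frobNorm_eq_norm {m : ℕ} (A : Matrix (Fin m) (Fin m) ℝ) : frobNorm A = ‖A‖ := by
  simp [frobNorm, frobenius_norm_def, Real.sqrt_eq_rpow]

theorem frobNorm_smul {m : ℕ} (c : ℝ) (A : Matrix (Fin m) (Fin m) ℝ) :
    frobNorm (c • A) = |c| * frobNorm A := by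
  rw [frobNorm_eq_norm, frobNorm_eq_norm, norm_smul, Real.norm_eq_abs]

end Frobenius

theorem mlog_mexp_of_isSymm {m : ℕ} {mlog : Matrix (Fin m) (Fin m) ℝ → Matrix (Fin m) (Fin m) ℝ}
    (hmlog_symm : ∀ S : Matrix (Fin m) (Fin m) ℝ, S.PosDef → (mlog S).IsSymm)
    (hmlog_exp : ∀ S : Matrix (Fin m) (Fin m) ℝ, S.PosDef → mexp (mlog S) = S)
    {L : Matrix (Fin m) (Fin m) ℝ} (hL : L.IsSymm) : mlog (mexp L) = L := by
  have hpos : (mexp L).PosDef := (isHermitian_iff_isSymm.mpr hL).posDef_exp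
  exact exp_injOn_isHermitian (isHermitian_iff_isSymm.mpr (hmlog_symm _ hpos))
    (isHermitian_iff_isSymm.mpr hL) (hmlog_exp _ hpos)

theorem logEuclidean_geodesic_general (m : ℕ)
    (mlog : Matrix (Fin m) (Fin m) ℝ → Matrix (Fin m) (Fin m) ℝ)
    (hmlog_symm : ∀ S : Matrix (Fin m) (Fin m) ℝ, S.PosDef → (mlog S).IsSymm)
    (hmlog_exp : ∀ S : Matrix (Fin m) (Fin m) ℝ, S.PosDef → mexp (mlog S) = S)
    (dLE : Matrix (Fin m) (Fin m) ℝ → Matrix (Fin m) (Fin m) ℝ → ℝ)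
    (hdLE : ∀ S₁ S₂, dLE S₁ S₂ = frobNorm (mlog S₁ - mlog S₂))
    (S₁ S₂ : Matrix (Fin m) (Fin m) ℝ) (hS₁ : S₁.PosDef) (hS₂ : S₂.PosDef)
    (γ : ℝ → Matrix (Fin m) (Fin m) ℝ)
    (hγ : ∀ t : ℝ, γ t = mexp ((1 - t) • mlog S₁ + t • mlog S₂)) :
    (∀ t ∈ Icc (0 : ℝ) 1, (γ t).PosDef) ∧
    γ 0 = S₁ ∧ γ 1 = S₂ ∧
    (∀ s ∈ Icc (0 : ℝ) 1, ∀ t ∈ Icc (0 : ℝ) 1,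
      dLE (γ s) (γ t) = |s - t| * dLE S₁ S₂) := by
  set L : ℝ → Matrix (Fin m) (Fin m) ℝ := fun t => (1 - t) • mlog S₁ + t • mlog S₂
  have hL : ∀ t, (L t).IsSymm := fun t =>
    ((hmlog_symm S₁ hS₁).smul _).add ((hmlog_symm S₂ hS₂).smul _)
  have hlogγ : ∀ t, mlog (γ t) = L t := fun t => by
    rw [hγ, mlog_mexp_of_isSymm hmlog_symm hmlog_exp (hL t)]
  refine ⟨fun t _ => hγ t ▸ (isHermitian_iff_isSymm.mpr (hL t)).posDef_exp, ?_, ?_, ?_⟩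
  · simpa [hγ] using hmlog_exp S₁ hS₁
  · simpa [hγ] using hmlog_exp S₂ hS₂
  · intro s _ t _
    have hdiff : L s - L t = (t - s) • (mlog S₁ - mlog S₂) := by simp only [L]; module
    rw [hdLE, hdLE, hlogγ, hlogγ, hdiff, frobNorm_smul, abs_sub_comm]

/-- For any `S₁, S₂ ∈ Sym⁺(m)`, the curve `γ(t) := mexp((1−t)·mlog S₁ + t·mlog S₂)`,
`t ∈ [0,1]`, takes values in `Sym⁺(m)`, satisfies `γ(0) = S₁` and `γ(1) = S₂`, and satisfies
`d_LE(γ(s), γ(t)) = |s − t| · d_LE(S₁, S₂)` for all `s, t ∈ [0,1]`.  Consequently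
`(Sym⁺(m), d_LE)` is a geodesic metric space. -/
theorem logEuclidean_geodesic (m : ℕ) (hm : 0 < m)
    (mlog : Matrix (Fin m) (Fin m) ℝ → Matrix (Fin m) (Fin m) ℝ)
    (hmlog_symm : ∀ S : Matrix (Fin m) (Fin m) ℝ, S.PosDef → (mlog S).IsSymm)
    (hmlog_exp : ∀ S : Matrix (Fin m) (Fin m) ℝ, S.PosDef → mexp (mlog S) = S)
    (dLE : Matrix (Fin m) (Fin m) ℝ → Matrix (Fin m) (Fin m) ℝ → ℝ)
    (hdLE : ∀ S₁ S₂, dLE S₁ S₂ = frobNorm (mlog S₁ - mlog S₂))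
    (S₁ S₂ : Matrix (Fin m) (Fin m) ℝ) (hS₁ : S₁.PosDef) (hS₂ : S₂.PosDef)
    (γ : ℝ → Matrix (Fin m) (Fin m) ℝ)
    (hγ : ∀ t : ℝ, γ t = mexp ((1 - t) • mlog S₁ + t • mlog S₂)) :
    (∀ t ∈ Icc (0 : ℝ) 1, (γ t).PosDef) ∧
    γ 0 = S₁ ∧ γ 1 = S₂ ∧
    (∀ s ∈ Icc (0 : ℝ) 1, ∀ t ∈ Icc (0 : ℝ) 1,
      dLE (γ s) (γ t) = |s - t| * dLE S₁ S₂) :=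
  logEuclidean_geodesic_general m mlog hmlog_symm hmlog_exp dLE hdLE S₁ S₂ hS₁ hS₂ γ hγ
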